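/- arXiv:1610.00456 — 2 statements merged into one kernel-verified Lean document; each statement's English description precedes it below -/
import Mathlib

section
/- Let ψ_μ = φ_{Q_μ} - μr²/2 where φ_{Q_μ} solves φ'' + (1/r)φ' + 8 e^{φ - μr²/2} = 0 with φ(0)=φ'(0)=0, and let φ_Q(r) = -2log(1+r²). Then for all r > 0 and μ > 0: φ_Q(r) - μr²/2 < ψ_μ(r) < φ_Q(r) < φ_{Q_μ}(r) < 0. -/
open Real

private lemma auxQ_hasDeriv (r : ℝ) :
    HasDerivAt (fun t : ℝ => -2 * Real.log (1 + t^2)) (-4*r/(1+r^2)) r := by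
  have h0 : (0:ℝ) < 1 + r^2 := by positivity
  have h1 : HasDerivAt (fun t : ℝ => 1 + t^2) (2*r) r := by
    simpa using (hasDerivAt_pow 2 r).const_add 1
  have h2 := (h1.log h0.ne')
  have := h2.const_mul (-2 : ℝ)
  refine this.congr_deriv ?_
  ring

private lemma auxQ_cont : Continuous (fun t : ℝ => -2 * Real.log (1 + t^2)) :=
  (Differentiable.continuous (fun x => (auxQ_hasDeriv x).differentiableAt))

private lemma auxQ_exp (r : ℝ) :
    Real.exp (-2 * Real.log (1 + r^2)) = ((1+r^2)^2)⁻¹ := by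
  have h0 : (0:ℝ) < 1 + r^2 := by positivity
  rw [show (-2:ℝ) * Real.log (1+r^2) = Real.log (((1+r^2)^2)⁻¹) by
    rw [Real.log_inv, Real.log_pow]; push_cast; ring]
  exact Real.exp_log (by positivity)

private lemma auxQ_expcont : Continuous (fun t : ℝ => Real.exp (-2 * Real.log (1 + t^2))) :=
  Real.continuous_exp.comp auxQ_cont

open intervalIntegral in
private lemma auxQ_integral (r : ℝ) :
    (∫ s in (0:ℝ)..r, s * Real.exp (-2 * Real.log (1+s^2))) = r^2/(2*(1+r^2)) := by
  have key : ∀ s : ℝ, HasDerivAt (fun t : ℝ => -(1/2) * (1+t^2)⁻¹)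
      (s * Real.exp (-2 * Real.log (1+s^2))) s := by
    intro s
    have h0 : (0:ℝ) < 1 + s^2 := by positivity
    have h1 : HasDerivAt (fun t : ℝ => 1 + t^2) (2*s) s := by
      simpa using (hasDerivAt_pow 2 s).const_add 1
    have h2 := (h1.inv h0.ne').const_mul (-(1/2) : ℝ)
    refine h2.congr_deriv ?_
    rw [auxQ_exp]
    field_simp
  have hc : Continuous (fun s : ℝ => s * Real.exp (-2 * Real.log (1+s^2))) :=
    continuous_id.mul auxQ_expcont
  rw [integral_eq_sub_of_hasDerivAt (fun s _ => key s) (hc.intervalIntegrable 0 r)]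
  have h0 : (0:ℝ) < 1 + r^2 := by positivity
  field_simp
  ring

set_option maxHeartbeats 1600000 in
open intervalIntegral Set in
/-- Comparison chain `φ_Q - μr²/2 < ψ_μ < φ_Q < φ_{Q_μ} < 0` for the radial
potential `φ_{Q_μ}` of the rescaled subcritical stationary profile. -/
theorem potential_comparison (μ : ℝ) (hμ : 0 < μ) (φμ : ℝ → ℝ)
    (hsmooth : ContDiff ℝ (⊤ : ℕ∞) φμ) (h0 : φμ 0 = 0) (h0' : deriv φμ 0 = 0)
    (hODE : ∀ r : ℝ, 0 < r →
      deriv (deriv φμ) r + (1 / r) * deriv φμ r + 8 * Real.exp (φμ r - μ * r ^ 2 / 2) = 0) :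
    ∀ r : ℝ, 0 < r →
      (-2 * Real.log (1 + r ^ 2) - μ * r ^ 2 / 2 < φμ r - μ * r ^ 2 / 2) ∧
      (φμ r - μ * r ^ 2 / 2 < -2 * Real.log (1 + r ^ 2)) ∧
      (-2 * Real.log (1 + r ^ 2) < φμ r) ∧ φμ r < 0 := by
  have h1 : ContDiff ℝ ((⊤:ℕ∞) : WithTop ℕ∞) φμ := hsmooth.of_le (by simp)
  obtain ⟨hφdiff, h2⟩ := contDiff_infty_iff_deriv.mp h1
  obtain ⟨hφ'diff, h3⟩ := contDiff_infty_iff_deriv.mp h2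
  have hφcont : Continuous φμ := hφdiff.continuous
  have hψc : Continuous (fun s : ℝ => φμ s - μ * s^2/2) := by fun_prop
  have hEc : Continuous (fun s : ℝ => Real.exp (φμ s - μ * s^2/2)) := by fun_prop
  -- integral representation of r φ'(r)
  have keyA : ∀ r : ℝ, 0 ≤ r →
      r * deriv φμ r = ∫ s in (0:ℝ)..r, (-8) * (s * Real.exp (φμ s - μ * s^2/2)) := by
    intro r hr
    have hderiv : ∀ s ∈ Set.uIcc (0:ℝ) r, HasDerivAt (fun t => t * deriv φμ t)
        ((-8) * (s * Real.exp (φμ s - μ * s^2/2))) s := by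
      intro s hs
      rw [Set.uIcc_of_le hr] at hs
      have hprod : HasDerivAt (fun t => t * deriv φμ t)
          (1 * deriv φμ s + s * deriv (deriv φμ) s) s :=
        (hasDerivAt_id s).mul (hφ'diff s).hasDerivAt
      convert hprod using 1
      rcases eq_or_lt_of_le hs.1 with h|h
      · rw [← h]; simp [h0']
      · have hODE' : s * deriv (deriv φμ) s + deriv φμ s
            + 8 * s * Real.exp (φμ s - μ * s^2/2) = 0 := by
          have hs0 : s ≠ 0 := ne_of_gt h
          have h2 := hODE s h
          have h4 : s * (deriv (deriv φμ) s + 1/s * deriv φμ s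
              + 8 * Real.exp (φμ s - μ * s^2/2)) = 0 := by rw [h2, mul_zero]
          have h3 : s * (1/s * deriv φμ s) = deriv φμ s := by field_simp
          nlinarith [h4, h3]
        linarith [hODE']
    have hcont : Continuous (fun s : ℝ => (-8:ℝ) * (s * Real.exp (φμ s - μ * s^2/2))) := by
      fun_prop
    have := integral_eq_sub_of_hasDerivAt hderiv (hcont.intervalIntegrable 0 r)
    rw [this]; simp [h0']
  have hcE : Continuous (fun s : ℝ => (-8:ℝ)*(s * Real.exp (φμ s - μ * s^2/2))) := by fun_prop
  have hcQ : Continuous (fun s : ℝ => (-8:ℝ)*(s * Real.exp (-2*Real.log (1+s^2)))) :=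
    continuous_const.mul (continuous_id.mul auxQ_expcont)
  have hcJ : Continuous (fun s : ℝ =>
      8*(s*(Real.exp (-2*Real.log (1+s^2)) - Real.exp (φμ s - μ * s^2/2)))) :=
    continuous_const.mul (continuous_id.mul (auxQ_expcont.sub hEc))
  -- J identity
  have hJ : ∀ r : ℝ, 0 ≤ r →
      (∫ s in (0:ℝ)..r, 8*(s*(Real.exp (-2*Real.log (1+s^2)) - Real.exp (φμ s - μ * s^2/2))))
        = r * deriv φμ r + 4*r^2/(1+r^2) := by
    intro r hr
    have h1r : (0:ℝ) < 1 + r^2 := by positivity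
    rw [integral_congr (g := fun s => ((-8)*(s * Real.exp (φμ s - μ * s^2/2)))
          - ((-8)*(s * Real.exp (-2*Real.log (1+s^2))))) (fun s _ => by ring),
        integral_sub (hcE.intervalIntegrable 0 r) (hcQ.intervalIntegrable 0 r),
        ← keyA r hr, integral_const_mul, auxQ_integral]
    field_simp
    ring
  -- derivatives of u and v
  have huHas : ∀ x : ℝ, HasDerivAt (fun t => φμ t - (-2*Real.log (1+t^2)))
      (deriv φμ x + 4*x/(1+x^2)) x := by
    intro x
    have := (hφdiff x).hasDerivAt.sub (auxQ_hasDeriv x)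
    refine this.congr_deriv ?_
    ring
  have hvHas : ∀ x : ℝ, HasDerivAt (fun t => φμ t - μ*t^2/2 - (-2*Real.log (1+t^2)))
      (deriv φμ x - μ*x + 4*x/(1+x^2)) x := by
    intro x
    have hp : HasDerivAt (fun t : ℝ => μ*t^2/2) (μ*x) x := by
      have h1 : HasDerivAt (fun t : ℝ => t^2) (2*x) x := by simpa using hasDerivAt_pow 2 x
      have h2 := (h1.const_mul μ).div_const 2
      refine h2.congr_deriv ?_
      ring
    have := ((hφdiff x).hasDerivAt.sub hp).sub (auxQ_hasDeriv x)
    refine this.congr_deriv ?_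
    ring
  have hvcont : Continuous (fun t => φμ t - μ*t^2/2 - (-2*Real.log (1+t^2))) :=
    Differentiable.continuous (fun x => (hvHas x).differentiableAt)
  have hv0 : (fun t => φμ t - μ*t^2/2 - (-2*Real.log (1+t^2))) 0 = 0 := by
    simp [h0]
  -- u > 0 where v < 0 before
  have hu : ∀ R : ℝ, 0 < R →
      (∀ s ∈ Ioo (0:ℝ) R, φμ s - μ*s^2/2 - (-2*Real.log (1+s^2)) < 0) →
      ∀ x ∈ Ioc (0:ℝ) R, 0 < φμ x - (-2*Real.log (1+x^2)) := by
    intro R hR hvlt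
    have hderivu : ∀ x ∈ Ioo (0:ℝ) R, 0 < deriv (fun t => φμ t - (-2*Real.log (1+t^2))) x := by
      intro x hx
      have hx0 : (0:ℝ) < x := hx.1
      have hpos : 0 < ∫ s in (0:ℝ)..x,
          8*(s*(Real.exp (-2*Real.log (1+s^2)) - Real.exp (φμ s - μ * s^2/2))) := by
        apply intervalIntegral_pos_of_pos_on (hcJ.intervalIntegrable 0 x) _ hx0
        intro s hs
        have hs0 : (0:ℝ) < s := hs.1
        have hvs := hvlt s ⟨hs.1, hs.2.trans hx.2⟩
        have hexp : Real.exp (φμ s - μ * s^2/2) < Real.exp (-2*Real.log (1+s^2)) :=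
          Real.exp_lt_exp.mpr (by linarith)
        have : 0 < Real.exp (-2*Real.log (1+s^2)) - Real.exp (φμ s - μ * s^2/2) := by linarith
        nlinarith
      rw [(huHas x).deriv]
      have hJx := hJ x hx0.le
      have hrel : x * (4*x/(1+x^2)) = 4*x^2/(1+x^2) := by ring
      nlinarith [hpos, hJx, hx0, hrel]
    have humono : StrictMonoOn (fun t => φμ t - (-2*Real.log (1+t^2))) (Icc 0 R) := by
      apply strictMonoOn_of_deriv_pos (convex_Icc 0 R)
        (Continuous.continuousOn (hφcont.sub auxQ_cont))
      rw [interior_Icc]; exact hderivu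
    intro x hx
    have := humono ⟨le_refl 0, hR.le⟩ ⟨hx.1.le, hx.2⟩ hx.1
    simp only [h0, Real.log_one] at this
    norm_num at this
    linarith [this]
  -- r v'(r) identity
  have hrv : ∀ r : ℝ, 0 < r → r * deriv (fun t => φμ t - μ*t^2/2 - (-2*Real.log (1+t^2))) r
      = (∫ s in (0:ℝ)..r, 8*(s*(Real.exp (-2*Real.log (1+s^2)) - Real.exp (φμ s - μ * s^2/2))))
        - μ*r^2 := by
    intro r hr
    rw [(hvHas r).deriv, hJ r hr.le]
    ring
  -- v' < 0 up to first touching point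
  have hv'neg : ∀ R : ℝ, 0 < R →
      (∀ s ∈ Ioo (0:ℝ) R, φμ s - μ*s^2/2 - (-2*Real.log (1+s^2)) < 0) →
      ∀ r ∈ Ioc (0:ℝ) R, deriv (fun t => φμ t - μ*t^2/2 - (-2*Real.log (1+t^2))) r < 0 := by
    intro R hR hvlt r hr
    have hr0 : (0:ℝ) < r := hr.1
    have huPos : ∀ s ∈ Ioc (0:ℝ) r, 0 < φμ s - (-2*Real.log (1+s^2)) :=
      hu r hr0 (fun s hs => hvlt s ⟨hs.1, hs.2.trans_le hr.2⟩)
    have hptwise : ∀ s ∈ Ioc (0:ℝ) r,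
        8*(s*(Real.exp (-2*Real.log (1+s^2)) - Real.exp (φμ s - μ * s^2/2))) < 2*μ*s := by
      intro s hs
      have hs0 : (0:ℝ) < s := hs.1
      have hus := huPos s hs
      have h1s : (0:ℝ) < 1+s^2 := by positivity
      have hA := auxQ_exp s
      have hexpid : Real.exp (φμ s - μ*s^2/2) = Real.exp (-2*Real.log (1+s^2))
          * Real.exp ((φμ s - μ*s^2/2) - (-2*Real.log (1+s^2))) := by
        rw [← Real.exp_add]; ring_nf
      have hBA : Real.exp (-2*Real.log (1+s^2))
          * (1 + ((φμ s - μ*s^2/2) - (-2*Real.log (1+s^2)))) ≤ Real.exp (φμ s - μ*s^2/2) := by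
        rw [hexpid]
        have h1 := Real.add_one_le_exp ((φμ s - μ*s^2/2) - (-2*Real.log (1+s^2)))
        nlinarith [Real.exp_pos (-2*Real.log (1+s^2))]
      have hd : (-2*Real.log (1+s^2)) - (φμ s - μ*s^2/2) < μ*s^2/2 := by linarith
      have e1 : Real.exp (-2*Real.log (1+s^2)) - Real.exp (φμ s - μ*s^2/2)
          < ((1+s^2)^2)⁻¹ * (μ*s^2/2) := by
        have hApos : (0:ℝ) < ((1+s^2)^2)⁻¹ := by positivity
        rw [hA] at hBA ⊢
        nlinarith [hBA, mul_lt_mul_of_pos_left hd hApos]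
      have e3 : 8*s*(((1+s^2)^2)⁻¹*(μ*s^2/2)) < 2*μ*s := by
        rw [show ((1+s^2)^2)⁻¹*(μ*s^2/2) = (μ*s^2/2)/(1+s^2)^2 by ring,
            show (8:ℝ)*s*((μ*s^2/2)/(1+s^2)^2) = (4*μ*s^3)/(1+s^2)^2 by ring,
            div_lt_iff₀ (by positivity)]
        nlinarith [mul_pos hμ hs0, mul_pos (mul_pos hμ hs0) (pow_pos hs0 4)]
      nlinarith [e1, e3, hs0]
    have hlt : (∫ s in (0:ℝ)..r,
        8*(s*(Real.exp (-2*Real.log (1+s^2)) - Real.exp (φμ s - μ * s^2/2))))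
        < ∫ s in (0:ℝ)..r, 2*μ*s := by
      apply integral_lt_integral_of_continuousOn_of_le_of_exists_lt hr0
        hcJ.continuousOn (by fun_prop)
      · exact fun s hs => (hptwise s hs).le
      · exact ⟨r, ⟨hr0.le, le_refl r⟩, hptwise r ⟨hr0, le_refl r⟩⟩
    have h2 : (∫ s in (0:ℝ)..r, 2*μ*s) = μ*r^2 := by
      rw [integral_const_mul, integral_id]
      ring
    have hid := hrv r hr0
    nlinarith [hid, hlt, h2, hr0]
  -- near zero: v' < 0
  obtain ⟨δ, hδpos, hδ'⟩ : ∃ δ : ℝ, 0 < δ ∧ ∀ r, 0 < r → r ≤ δ →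
      deriv (fun t => φμ t - μ*t^2/2 - (-2*Real.log (1+t^2))) r < 0 := by
    have hψ0 : φμ 0 - μ * 0^2/2 = 0 := by simp [h0]
    obtain ⟨δ₁, hδ₁, hδprop⟩ := Metric.continuousAt_iff.mp hψc.continuousAt (μ/8) (by positivity)
    refine ⟨δ₁/2, by positivity, ?_⟩
    intro r hr hrle
    have hb : ∀ s ∈ Icc (0:ℝ) r, (-8:ℝ)*(s*Real.exp (φμ s - μ*s^2/2))
        ≤ ((-8)*Real.exp (-(μ/8)))*s := by
      intro s hs
      have hsd : dist s 0 < δ₁ := by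
        rw [Real.dist_eq, sub_zero, abs_of_nonneg hs.1]; linarith [hs.2]
      have h2 := hδprop hsd
      rw [Real.dist_eq, hψ0, sub_zero] at h2
      have h3 : -(μ/8) ≤ φμ s - μ*s^2/2 := by
        have := abs_lt.mp h2
        linarith [this.1]
      have h4 : Real.exp (-(μ/8)) ≤ Real.exp (φμ s - μ*s^2/2) := Real.exp_le_exp.mpr h3
      nlinarith [hs.1, Real.exp_pos (-(μ/8))]
    have hcb : Continuous (fun s : ℝ => ((-8:ℝ)*Real.exp (-(μ/8)))*s) := by fun_prop
    have hint := integral_mono_on (μ := MeasureTheory.volume) hr.le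
      (hcE.intervalIntegrable 0 r) (hcb.intervalIntegrable 0 r) hb
    have hR : (∫ s in (0:ℝ)..r, ((-8)*Real.exp (-(μ/8)))*s)
        = (-8)*Real.exp (-(μ/8)) * (r^2/2) := by
      rw [integral_const_mul, integral_id]
      ring
    rw [hR] at hint
    have hid : r * deriv (fun t => φμ t - μ*t^2/2 - (-2*Real.log (1+t^2))) r
        = (∫ s in (0:ℝ)..r, (-8)*(s*Real.exp (φμ s - μ*s^2/2))) - μ*r^2 + 4*r^2/(1+r^2) := by
      rw [(hvHas r).deriv, ← keyA r hr.le]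
      ring
    have h1r : (0:ℝ) < 1 + r^2 := by positivity
    have h4 : 4*r^2/(1+r^2) ≤ 4*r^2 := by
      rw [div_le_iff₀ h1r]
      nlinarith [sq_nonneg r]
    have hexp : 1 - μ/8 ≤ Real.exp (-(μ/8)) := by
      nlinarith [Real.add_one_le_exp (-(μ/8))]
    have hfin : r * deriv (fun t => φμ t - μ*t^2/2 - (-2*Real.log (1+t^2))) r < 0 := by
      nlinarith [hint, hid, h4, mul_le_mul_of_nonneg_right hexp (sq_nonneg r),
        mul_pos hμ (pow_pos hr 2)]
    nlinarith [hfin, hr]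
  -- v < 0 on (0, δ]
  have hδv : ∀ s : ℝ, 0 < s → s ≤ δ → φμ s - μ*s^2/2 - (-2*Real.log (1+s^2)) < 0 := by
    have anti : StrictAntiOn (fun t => φμ t - μ*t^2/2 - (-2*Real.log (1+t^2))) (Icc 0 δ) := by
      apply strictAntiOn_of_deriv_neg (convex_Icc 0 δ) hvcont.continuousOn
      rw [interior_Icc]
      exact fun x hx => hδ' x hx.1 hx.2.le
    intro s hs hsle
    have := anti ⟨le_refl 0, hδpos.le⟩ ⟨hs.le, hsle⟩ hs
    rw [hv0] at this
    exact this
  -- main claim: v < 0 everywhere on (0,∞)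
  have hvneg : ∀ r : ℝ, 0 < r → φμ r - μ*r^2/2 - (-2*Real.log (1+r^2)) < 0 := by
    by_contra hcon
    push_neg at hcon
    obtain ⟨r₁, hr₁, hvr₁⟩ := hcon
    set S := {x : ℝ | δ ≤ x ∧ 0 ≤ φμ x - μ*x^2/2 - (-2*Real.log (1+x^2))} with hS
    have hr₁S : r₁ ∈ S := by
      refine ⟨?_, hvr₁⟩
      by_contra h
      push_neg at h
      exact absurd hvr₁ (not_le.mpr (hδv r₁ hr₁ h.le))
    have hSc : IsClosed S := by
      apply IsClosed.inter (isClosed_le continuous_const continuous_id)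
      exact isClosed_le continuous_const hvcont
    have hSb : BddBelow S := ⟨δ, fun x hx => hx.1⟩
    have hr₀S : sInf S ∈ S := hSc.csInf_mem ⟨r₁, hr₁S⟩ hSb
    have hr₀pos : 0 < sInf S := lt_of_lt_of_le hδpos hr₀S.1
    have hvIoo : ∀ s ∈ Ioo (0:ℝ) (sInf S), φμ s - μ*s^2/2 - (-2*Real.log (1+s^2)) < 0 := by
      intro s hs
      rcases le_or_gt s δ with h|h
      · exact hδv s hs.1 h
      · by_contra hc
        push_neg at hc
        exact absurd (csInf_le hSb ⟨h.le, hc⟩) (not_le.mpr hs.2)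
    have hdneg := hv'neg (sInf S) hr₀pos hvIoo
    have anti2 : StrictAntiOn (fun t => φμ t - μ*t^2/2 - (-2*Real.log (1+t^2)))
        (Icc 0 (sInf S)) := by
      apply strictAntiOn_of_deriv_neg (convex_Icc _ _) hvcont.continuousOn
      rw [interior_Icc]
      exact fun x hx => hdneg x ⟨hx.1, hx.2.le⟩
    have := anti2 ⟨le_refl 0, hr₀pos.le⟩ ⟨hr₀pos.le, le_refl _⟩ hr₀pos
    rw [hv0] at this
    exact absurd hr₀S.2 (not_le.mpr this)
  -- conclusions
  intro r hr
  have h2nd : φμ r - μ*r^2/2 - (-2*Real.log (1+r^2)) < 0 := hvneg r hr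
  have h3rd : 0 < φμ r - (-2*Real.log (1+r^2)) :=
    hu (r+1) (by linarith) (fun s hs => hvneg s hs.1) r ⟨hr, by linarith⟩
  have h4th : φμ r < 0 := by
    have hderivφ : ∀ x : ℝ, 0 < x → deriv φμ x < 0 := by
      intro x hx
      have hkA := keyA x hx.le
      have hpos : 0 < ∫ s in (0:ℝ)..x, 8*(s*Real.exp (φμ s - μ*s^2/2)) := by
        apply intervalIntegral_pos_of_pos_on ((by fun_prop :
          Continuous (fun s : ℝ => 8*(s*Real.exp (φμ s - μ*s^2/2)))).intervalIntegrable 0 x)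
          _ hx
        intro s hs
        have := hs.1
        have := Real.exp_pos (φμ s - μ*s^2/2)
        nlinarith
      have hneg' : (∫ s in (0:ℝ)..x, (-8)*(s*Real.exp (φμ s - μ*s^2/2)))
          = -∫ s in (0:ℝ)..x, 8*(s*Real.exp (φμ s - μ*s^2/2)) := by
        rw [← integral_neg]
        apply integral_congr
        intro s _
        ring
      rw [hneg'] at hkA
      nlinarith [hkA, hpos, hx]
    have anti3 : StrictAntiOn φμ (Icc 0 r) := by
      apply strictAntiOn_of_deriv_neg (convex_Icc 0 r) hφcont.continuousOn
      rw [interior_Icc]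
      exact fun x hx => hderivφ x hx.1
    have := anti3 ⟨le_refl 0, hr.le⟩ ⟨hr.le, le_refl r⟩ hr
    rwa [h0] at this
  exact ⟨by linarith, by linarith, by linarith, h4th⟩
end

section
/- Hardy-type inequality with weight Q_μ: for f ∈ H¹(ℝ², Q_μ dy), ∫ Q_μ |∇f|² dy + ∫_{B} Q_μ f² dy ≥ (3/4)∫ Q_μ f² |y|²/(1+|y|²)² dy, where B is the unit ball. -/
open MeasureTheory Real

abbrev E2 := EuclideanSpace ℝ (Fin 2)

open Filter Metric
open scoped ContDiff

lemma one_le_inf : (∞ : WithTop ℕ∞) ≠ 0 := by simp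

/-- Integration by parts: if `F` is smooth with compact support and `G` is smooth, then
`∫ ∂_v F · G = - ∫ F · ∂_v G`. -/
lemma ibp_compact (F G : E2 → ℝ) (hF : ContDiff ℝ ∞ F) (hFc : HasCompactSupport F)
    (hG : ContDiff ℝ ∞ G) (v : E2) :
    ∫ y, fderiv ℝ F y v * G y = - ∫ y, F y * fderiv ℝ G y v := by
  obtain ⟨R, hR0, hK⟩ := hFc.isBounded.subset_ball_lt 0 0
  set c : ContDiffBump (0 : E2) := ⟨R, R + 1, hR0, by linarith⟩ with hc
  set G' : E2 → ℝ := fun y => c y * G y with hG'def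
  have hG' : ContDiff ℝ ∞ G' := c.contDiff.mul hG
  have hG'c : HasCompactSupport G' := c.hasCompactSupport.mul_right
  obtain ⟨C, hCF⟩ := hF.lipschitzWith_of_hasCompactSupport hFc one_le_inf
  obtain ⟨D, hDG⟩ := hG'.lipschitzWith_of_hasCompactSupport hG'c one_le_inf
  have key := hDG.integral_lineDeriv_mul_eq (μ := volume) hCF hFc v
  have hFd : Differentiable ℝ F := hF.differentiable one_le_inf
  have hGd : Differentiable ℝ G := hG.differentiable one_le_inf
  have hG'd : Differentiable ℝ G' := hG'.differentiable one_le_inf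
  have hone : ∀ x ∈ ball (0 : E2) R, c x = 1 := fun x hx =>
    c.one_of_mem_closedBall (ball_subset_closedBall hx)
  have e1 : ∀ x, lineDeriv ℝ G' x v * F x = fderiv ℝ G x v * F x := by
    intro x
    by_cases hx : F x = 0
    · simp [hx]
    · have hmem : x ∈ ball (0 : E2) R :=
        hK (subset_tsupport F (by simpa using hx))
      have heq : G' =ᶠ[nhds x] G := by
        filter_upwards [Metric.isOpen_ball.mem_nhds hmem] with y hy
        simp [hG'def, hone y hy]
      rw [(hG'd x).lineDeriv_eq_fderiv, heq.fderiv_eq]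
  have e2 : ∀ x, lineDeriv ℝ F x (-v) * G' x = -(fderiv ℝ F x v * G x) := by
    intro x
    rw [(hFd x).lineDeriv_eq_fderiv, map_neg]
    by_cases hx : fderiv ℝ F x = 0
    · simp [hx]
    · have hmem : x ∈ ball (0 : E2) R :=
        hK ((support_fderiv_subset ℝ) (by simpa using hx))
      have : G' x = G x := by simp [hG'def, hone x hmem]
      rw [this]; ring
  simp only [e1, e2] at key
  rw [integral_neg] at key
  have : ∫ x, F x * fderiv ℝ G x v = ∫ x, fderiv ℝ G x v * F x := by
    congr 1; ext x; ring
  rw [this, key, neg_neg]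

/-- Integration by parts against the vector field `A(y) y`. -/
lemma ibp_div (g A : E2 → ℝ) (hg : ContDiff ℝ ∞ g) (hgc : HasCompactSupport g)
    (hA : ContDiff ℝ ∞ A) :
    ∫ y, A y * fderiv ℝ g y y = - ∫ y, g y * (fderiv ℝ A y y + 2 * A y) := by
  classical
  set e : Fin 2 → E2 := fun i => EuclideanSpace.single i 1 with he
  have hdec : ∀ (L : E2 →L[ℝ] ℝ) (y : E2), L y = ∑ i, y i * L (e i) := by
    intro L y
    have := (EuclideanSpace.basisFun (Fin 2) ℝ).sum_repr y
    conv_lhs => rw [← this]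
    rw [map_sum]
    refine Finset.sum_congr rfl fun i _ => ?_
    rw [EuclideanSpace.basisFun_repr, EuclideanSpace.basisFun_apply, _root_.map_smul, smul_eq_mul]
  have hAd : Differentiable ℝ A := hA.differentiable one_le_inf
  have hgd : Differentiable ℝ g := hg.differentiable one_le_inf
  have hproj : ∀ i : Fin 2, ContDiff ℝ ∞ (fun y : E2 => y i) :=
    fun i => (EuclideanSpace.proj i : E2 →L[ℝ] ℝ).contDiff
  have hGi : ∀ i : Fin 2, ContDiff ℝ ∞ (fun y : E2 => A y * y i) :=
    fun i => hA.mul (hproj i)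
  have hfd : ∀ (i : Fin 2) (y : E2),
      fderiv ℝ (fun y : E2 => A y * y i) y (e i) = A y + y i * fderiv ℝ A y (e i) := by
    intro i y
    have h1 : fderiv ℝ (fun y : E2 => A y * y i) y
        = A y • fderiv ℝ (fun y : E2 => y i) y + (y i) • fderiv ℝ A y := by
      exact fderiv_mul (hAd y) ((hproj i).differentiable one_le_inf y)
    have h2 : fderiv ℝ (fun y : E2 => y i) y = (EuclideanSpace.proj i : E2 →L[ℝ] ℝ) :=
      (EuclideanSpace.proj i : E2 →L[ℝ] ℝ).fderiv
    rw [h1, h2]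
    have h3 : (EuclideanSpace.proj i : E2 →L[ℝ] ℝ) (e i) = 1 := by
      simp [he, EuclideanSpace.single_apply]
    simp [h3]
  have hint : ∀ i : Fin 2,
      Integrable (fun y => fderiv ℝ g y (e i) * (A y * y i)) := by
    intro i
    apply Continuous.integrable_of_hasCompactSupport
    · exact (((hg.continuous_fderiv one_le_inf).clm_apply continuous_const).mul
        ((hGi i).continuous))
    · exact (hgc.fderiv_apply ℝ (e i)).mul_right
  calc ∫ y, A y * fderiv ℝ g y y
      = ∫ y, ∑ i, fderiv ℝ g y (e i) * (A y * y i) := by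
        congr 1; ext y
        rw [hdec (fderiv ℝ g y) y, Finset.mul_sum]
        refine Finset.sum_congr rfl fun i _ => by ring
    _ = ∑ i, ∫ y, fderiv ℝ g y (e i) * (A y * y i) :=
        integral_finset_sum _ (fun i _ => hint i)
    _ = ∑ i, - ∫ y, g y * fderiv ℝ (fun y : E2 => A y * y i) y (e i) := by
        refine Finset.sum_congr rfl fun i _ => ?_
        exact ibp_compact g _ hg hgc (hGi i) (e i)
    _ = - ∑ i, ∫ y, g y * (A y + y i * fderiv ℝ A y (e i)) := by
        rw [← Finset.sum_neg_distrib]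
        refine Finset.sum_congr rfl fun i _ => ?_
        congr 1; congr 1; ext y; rw [hfd i y]
    _ = - ∫ y, ∑ i, g y * (A y + y i * fderiv ℝ A y (e i)) := by
        rw [← integral_finset_sum]
        intro i _
        apply Continuous.integrable_of_hasCompactSupport
        · exact hg.continuous.mul (hA.continuous.add (((hproj i).continuous).mul
            ((hA.continuous_fderiv one_le_inf).clm_apply continuous_const)))
        · exact hgc.mul_right
    _ = - ∫ y, g y * (fderiv ℝ A y y + 2 * A y) := by
        congr 1; congr 1; ext y
        rw [hdec (fderiv ℝ A y) y]
        simp [Finset.mul_sum, Fin.sum_univ_two]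
        ring

set_option maxHeartbeats 2000000 in
/-- Hardy-type inequality with weight `Q_μ`:
`∫ Q_μ |∇f|² + ∫_B Q_μ f² ≥ (3/4) ∫ Q_μ f² |y|²/(1+|y|²)²`, where `Q_μ` satisfies
`y·∇Q_μ = (-4|y|²/(1+|y|²) - μ s(y)) Q_μ` with `s ≥ 0`. -/
theorem weighted_hardy (Q s : E2 → ℝ) (μ : ℝ) (hμ : 0 ≤ μ)
    (hQpos : ∀ y, 0 < Q y) (hQsmooth : ContDiff ℝ (⊤ : ℕ∞) Q)
    (hgrad : ∀ y : E2,
      fderiv ℝ Q y y = (-4 * ‖y‖ ^ 2 / (1 + ‖y‖ ^ 2) - μ * s y) * Q y)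
    (hs : ∀ y, 0 ≤ s y)
    (f : E2 → ℝ) (hf : ContDiff ℝ (⊤ : ℕ∞) f) (hfc : HasCompactSupport f) :
    (3 / 4) * ∫ y, Q y * (f y) ^ 2 * ‖y‖ ^ 2 / (1 + ‖y‖ ^ 2) ^ 2 ≤
      (∫ y, Q y * ‖fderiv ℝ f y‖ ^ 2) +
      ∫ y in Metric.ball (0 : E2) 1, Q y * (f y) ^ 2 := by
  have hf' : ContDiff ℝ ∞ f := hf.of_le (by simp)
  have hQ' : ContDiff ℝ ∞ Q := hQsmooth.of_le (by simp)
  have hwpos : ∀ y : E2, (0:ℝ) < 1 + ‖y‖ ^ 2 := fun y => by positivity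
  have hwne : ∀ y : E2, (1:ℝ) + ‖y‖ ^ 2 ≠ 0 := fun y => (hwpos y).ne'
  have hwsm : ContDiff ℝ ∞ (fun y : E2 => 1 + ‖y‖ ^ 2) :=
    contDiff_const.add (contDiff_norm_sq ℝ)
  set A : E2 → ℝ := fun y => Q y * ((1 + ‖y‖ ^ 2)⁻¹) with hAdef
  have hAsm : ContDiff ℝ ∞ A := hQ'.mul (hwsm.inv hwne)
  set g : E2 → ℝ := fun y => f y ^ 2 with hgdef
  have hgsm : ContDiff ℝ ∞ g := hf'.pow 2
  have hgc : HasCompactSupport g := by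
    have := hfc.comp_left (g := fun t : ℝ => t ^ 2) (by simp)
    exact this
  -- derivative of the weight 1 + ‖y‖²
  have hnormsq : ∀ y : E2, HasFDerivAt (fun x : E2 => 1 + ‖x‖ ^ 2)
      (2 • (innerSL ℝ y)) y :=
    fun y => ((hasStrictFDerivAt_norm_sq y).hasFDerivAt).const_add 1
  have hWapp : ∀ y : E2, (2 • (innerSL ℝ y)) y = 2 * ‖y‖ ^ 2 := by
    intro y
    rw [ContinuousLinearMap.smul_apply, innerSL_apply_apply, real_inner_self_eq_norm_sq, two_smul]
    ring
  -- derivative of A in the direction y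
  have hAyy : ∀ y : E2, fderiv ℝ A y y =
      Q y * (2 * ‖y‖ ^ 2 * (-(((1 + ‖y‖ ^ 2) ^ 2)⁻¹))) + (1 + ‖y‖ ^ 2)⁻¹ * fderiv ℝ Q y y := by
    intro y
    have hinv : HasFDerivAt (fun x : E2 => (1 + ‖x‖ ^ 2)⁻¹)
        ((ContinuousLinearMap.smulRight (1 : ℝ →L[ℝ] ℝ)
          (-(((1 + ‖y‖ ^ 2) ^ 2)⁻¹))).comp (2 • (innerSL ℝ y))) y :=
      (hasFDerivAt_inv (hwne y)).comp y (hnormsq y)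
    have hmul := ((hQ'.differentiable one_le_inf y).hasFDerivAt).mul hinv
    rw [show fderiv ℝ A y = _ from hmul.fderiv]
    rw [ContinuousLinearMap.add_apply, ContinuousLinearMap.smul_apply,
      ContinuousLinearMap.comp_apply, hWapp y, ContinuousLinearMap.smulRight_apply,
      ContinuousLinearMap.one_apply, ContinuousLinearMap.smul_apply]
    simp only [smul_eq_mul]
  -- derivative of g in the direction y
  have hgyy : ∀ y : E2, fderiv ℝ g y y = 2 * f y * fderiv ℝ f y y := by
    intro y
    have h1' : fderiv ℝ g y = f y • fderiv ℝ f y + f y • fderiv ℝ f y := by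
      have : g = fun y => f y * f y := by funext y; simp only [hgdef]; ring
      rw [this, show fderiv ℝ (fun y => f y * f y) y = _ from fderiv_mul (hf'.differentiable one_le_inf y) (hf'.differentiable one_le_inf y)]
    rw [h1']
    simp only [ContinuousLinearMap.add_apply, ContinuousLinearMap.smul_apply, smul_eq_mul]
    ring
  -- the integration by parts identity
  have key := ibp_div g A hgsm hgc hAsm
  -- integrability helper
  have hint2 : ∀ u : E2 → ℝ, Continuous u → Integrable (fun y => u y * f y ^ 2) := by
    intro u hu
    exact (hu.mul ((hf'.continuous).pow 2)).integrable_of_hasCompactSupport hgc.mul_left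
  have hfQcont : Continuous fun y : E2 => fderiv ℝ Q y y :=
    (hQ'.continuous_fderiv one_le_inf).clm_apply continuous_id
  -- φ and ψ
  set φ : E2 → ℝ := fun y => (4 * ‖y‖ ^ 2 - 2) / (1 + ‖y‖ ^ 2) ^ 2 * Q y * f y ^ 2 with hφdef
  set ψ : E2 → ℝ := fun y =>
    ((-4 * ‖y‖ ^ 2 / (1 + ‖y‖ ^ 2)) * Q y - fderiv ℝ Q y y) / (1 + ‖y‖ ^ 2) * f y ^ 2 with hψdef
  have hφint : Integrable φ := by
    have : φ = fun y => ((4 * ‖y‖ ^ 2 - 2) / (1 + ‖y‖ ^ 2) ^ 2 * Q y) * f y ^ 2 := by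
      funext y; simp only [hφdef]
    rw [this]
    refine hint2 _ ?_
    exact ((continuous_const.mul (contDiff_norm_sq ℝ (E := E2) (n := ∞)).continuous).sub
      continuous_const).div (hwsm.continuous.pow 2) (fun y => pow_ne_zero 2 (hwne y)) |>.mul hQ'.continuous
  have hψint : Integrable ψ := by
    refine hint2 _ ?_
    refine Continuous.div ?_ hwsm.continuous hwne
    exact ((((continuous_const.mul (contDiff_norm_sq ℝ (E := E2) (n := ∞)).continuous)).div
      hwsm.continuous hwne).mul hQ'.continuous).sub hfQcont
  have hψ0 : ∀ y, 0 ≤ ψ y := by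
    intro y
    have h := hgrad y
    have h2 : (-4 * ‖y‖ ^ 2 / (1 + ‖y‖ ^ 2)) * Q y - fderiv ℝ Q y y = μ * s y * Q y := by
      rw [h]; ring
    rw [hψdef]
    simp only
    rw [h2]
    have : 0 ≤ μ * s y * Q y := mul_nonneg (mul_nonneg hμ (hs y)) (hQpos y).le
    positivity
  -- pointwise identity: -(g (A' + 2A)) = φ + ψ
  have hpoint : ∀ y, -(g y * (fderiv ℝ A y y + 2 * A y)) = φ y + ψ y := by
    intro y
    rw [hAyy y]
    simp only [hgdef, hAdef, hφdef, hψdef]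
    field_simp
    ring
  have hEeq : ∫ y, A y * fderiv ℝ g y y = ∫ y, (φ y + ψ y) := by
    rw [key, ← integral_neg]
    congr 1; ext y; rw [hpoint y]
  -- step: ∫ φ ≤ ∫ (φ + ψ)
  have h5 : ∫ y, φ y ≤ ∫ y, (φ y + ψ y) := by
    apply integral_mono hφint (hφint.add hψint)
    intro y
    simp only [Pi.add_apply]
    linarith [hψ0 y]
  -- quadratic pointwise bound
  have hquad : ∀ y, A y * fderiv ℝ g y y ≤
      2 * (Q y * ‖fderiv ℝ f y‖ ^ 2) + (1/2) * (Q y * f y ^ 2 * ‖y‖ ^ 2 / (1 + ‖y‖ ^ 2) ^ 2) := by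
    intro y
    rw [hgyy y]
    set N := ‖fderiv ℝ f y‖ with hN
    set r := ‖y‖ with hr
    set W := 1 + ‖y‖ ^ 2 with hW
    have hWpos : 0 < W := hwpos y
    have hQy := hQpos y
    have hub : f y * fderiv ℝ f y y ≤ |f y| * (N * r) := by
      calc f y * fderiv ℝ f y y ≤ |f y * fderiv ℝ f y y| := le_abs_self _
        _ = |f y| * |fderiv ℝ f y y| := abs_mul _ _
        _ ≤ |f y| * (N * r) := by
            gcongr
            · rw [← Real.norm_eq_abs]
              exact (fderiv ℝ f y).le_opNorm y
    have hstep1 : A y * (2 * f y * fderiv ℝ f y y) ≤ 2 * (Q y / W) * (|f y| * (N * r)) := by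
      have hApos : 0 < A y := by
        rw [hAdef]; simp only; positivity
      have hA' : A y = Q y / W := by rw [hAdef]; simp only [hW]; ring
      rw [hA']
      have := mul_le_mul_of_nonneg_left hub (by positivity : (0:ℝ) ≤ 2 * (Q y / W))
      calc Q y / W * (2 * f y * fderiv ℝ f y y)
          = 2 * (Q y / W) * (f y * fderiv ℝ f y y) := by ring
        _ ≤ 2 * (Q y / W) * (|f y| * (N * r)) := this
    have hstep2 : ∀ F : ℝ, 2 * (Q y / W) * (F * (N * r)) ≤
        2 * (Q y * N ^ 2) + (1/2) * (Q y * F ^ 2 * r ^ 2 / W ^ 2) := by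
      intro F
      have heq : 2 * (Q y * N ^ 2) + (1/2) * (Q y * F ^ 2 * r ^ 2 / W ^ 2)
          - 2 * (Q y / W) * (F * (N * r))
          = 2 * Q y / W ^ 2 * (N * W - F * r / 2) ^ 2 := by
        field_simp
        ring
      have hnn : 0 ≤ 2 * Q y / W ^ 2 * (N * W - F * r / 2) ^ 2 := by positivity
      linarith [heq, hnn]
    have habs : |f y| ^ 2 = f y ^ 2 := sq_abs _
    calc A y * (2 * f y * fderiv ℝ f y y)
        ≤ 2 * (Q y / W) * (|f y| * (N * r)) := hstep1
      _ ≤ 2 * (Q y * N ^ 2) + (1/2) * (Q y * |f y| ^ 2 * r ^ 2 / W ^ 2) := hstep2 _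
      _ = 2 * (Q y * N ^ 2) + (1/2) * (Q y * f y ^ 2 * r ^ 2 / W ^ 2) := by rw [habs]
  -- integrability of the pieces
  have hI1int : Integrable (fun y => Q y * ‖fderiv ℝ f y‖ ^ 2) := by
    apply Continuous.integrable_of_hasCompactSupport
    · exact hQ'.continuous.mul (((hf'.continuous_fderiv one_le_inf).norm).pow 2)
    · have := (hfc.fderiv (𝕜 := ℝ)).comp_left
        (g := fun L : E2 →L[ℝ] ℝ => ‖L‖ ^ 2) (by simp)
      exact HasCompactSupport.mul_left this
  have hTint : Integrable (fun y => Q y * f y ^ 2 * ‖y‖ ^ 2 / (1 + ‖y‖ ^ 2) ^ 2) := by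
    have heq : (fun y : E2 => Q y * f y ^ 2 * ‖y‖ ^ 2 / (1 + ‖y‖ ^ 2) ^ 2)
        = fun y => (Q y * ‖y‖ ^ 2 / (1 + ‖y‖ ^ 2) ^ 2) * f y ^ 2 := by
      ext y; ring
    rw [heq]
    refine hint2 _ ?_
    exact (hQ'.continuous.mul (contDiff_norm_sq ℝ (E := E2) (n := ∞)).continuous).div
      (hwsm.continuous.pow 2) (fun y => by positivity)
  have hEint : Integrable (fun y => A y * fderiv ℝ g y y) := by
    apply Continuous.integrable_of_hasCompactSupport
    · exact hAsm.continuous.mul ((hgsm.continuous_fderiv one_le_inf).clm_apply continuous_id)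
    · apply (hgc.fderiv (𝕜 := ℝ)).mono
      intro y hy
      simp only [Function.mem_support] at hy ⊢
      intro h0
      apply hy
      rw [h0]
      simp
  -- step: E ≤ 2 I1 + (1/2) T
  have h6 : ∫ y, A y * fderiv ℝ g y y ≤
      2 * (∫ y, Q y * ‖fderiv ℝ f y‖ ^ 2)
        + (1/2) * ∫ y, Q y * f y ^ 2 * ‖y‖ ^ 2 / (1 + ‖y‖ ^ 2) ^ 2 := by
    have := integral_mono hEint ((hI1int.const_mul 2).add (hTint.const_mul (1/2))) hquad
    calc ∫ y, A y * fderiv ℝ g y y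
        ≤ ∫ y, (2 * (Q y * ‖fderiv ℝ f y‖ ^ 2)
            + (1/2) * (Q y * f y ^ 2 * ‖y‖ ^ 2 / (1 + ‖y‖ ^ 2) ^ 2)) := this
      _ = 2 * (∫ y, Q y * ‖fderiv ℝ f y‖ ^ 2)
            + (1/2) * ∫ y, Q y * f y ^ 2 * ‖y‖ ^ 2 / (1 + ‖y‖ ^ 2) ^ 2 := by
          rw [integral_add (hI1int.const_mul 2) (hTint.const_mul (1/2)),
            integral_const_mul, integral_const_mul]
  -- step: 2T - ∫φ ≤ 2 I2
  have hQf2int : Integrable (fun y : E2 => 2 * (Q y * f y ^ 2)) := by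
    have : (fun y : E2 => 2 * (Q y * f y ^ 2)) = fun y => (2 * Q y) * f y ^ 2 := by
      ext y; ring
    rw [this]
    exact hint2 _ (continuous_const.mul hQ'.continuous)
  have hindint : Integrable
      ((Metric.ball (0:E2) 1).indicator (fun y => 2 * (Q y * f y ^ 2))) :=
    hQf2int.indicator measurableSet_ball
  have h7 : (2 * ∫ y, Q y * f y ^ 2 * ‖y‖ ^ 2 / (1 + ‖y‖ ^ 2) ^ 2) - (∫ y, φ y)
      ≤ 2 * ∫ y in Metric.ball (0:E2) 1, Q y * f y ^ 2 := by
    have hpt : ∀ y, 2 * (Q y * f y ^ 2 * ‖y‖ ^ 2 / (1 + ‖y‖ ^ 2) ^ 2) - φ y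
        ≤ (Metric.ball (0:E2) 1).indicator (fun y => 2 * (Q y * f y ^ 2)) y := by
      intro y
      have hQy := (hQpos y).le
      have hWpos := hwpos y
      have hid : 2 * (Q y * f y ^ 2 * ‖y‖ ^ 2 / (1 + ‖y‖ ^ 2) ^ 2) - φ y
          = 2 * (Q y * f y ^ 2) / (1 + ‖y‖ ^ 2) ^ 2 * (1 - ‖y‖ ^ 2) := by
        simp only [hφdef]
        ring
      by_cases hy : y ∈ Metric.ball (0:E2) 1
      · rw [Set.indicator_of_mem hy, hid]
        have h1 : (1:ℝ) - ‖y‖ ^ 2 ≤ (1 + ‖y‖ ^ 2) ^ 2 := by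
          nlinarith [sq_nonneg ‖y‖, sq_nonneg (‖y‖ ^ 2)]
        have hfac : (0:ℝ) ≤ 2 * (Q y * f y ^ 2) / (1 + ‖y‖ ^ 2) ^ 2 := by positivity
        calc 2 * (Q y * f y ^ 2) / (1 + ‖y‖ ^ 2) ^ 2 * (1 - ‖y‖ ^ 2)
            ≤ 2 * (Q y * f y ^ 2) / (1 + ‖y‖ ^ 2) ^ 2 * ((1 + ‖y‖ ^ 2) ^ 2) :=
              mul_le_mul_of_nonneg_left h1 hfac
          _ = 2 * (Q y * f y ^ 2) := div_mul_cancel₀ _ (by positivity)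
      · rw [Set.indicator_of_notMem hy, hid]
        have hr : 1 ≤ ‖y‖ := by
          by_contra hcon
          exact hy (by simpa using (lt_of_not_ge hcon))
        have h1r : 1 - ‖y‖ ^ 2 ≤ 0 := by nlinarith
        have hfac : (0:ℝ) ≤ 2 * (Q y * f y ^ 2) / (1 + ‖y‖ ^ 2) ^ 2 := by positivity
        exact mul_nonpos_of_nonneg_of_nonpos hfac h1r
    have := integral_mono ((hTint.const_mul 2).sub hφint) hindint hpt
    calc (2 * ∫ y, Q y * f y ^ 2 * ‖y‖ ^ 2 / (1 + ‖y‖ ^ 2) ^ 2) - (∫ y, φ y)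
        = ∫ y, (2 * (Q y * f y ^ 2 * ‖y‖ ^ 2 / (1 + ‖y‖ ^ 2) ^ 2) - φ y) := by
          rw [integral_sub (hTint.const_mul 2) hφint, integral_const_mul]
      _ ≤ ∫ y, (Metric.ball (0:E2) 1).indicator (fun y => 2 * (Q y * f y ^ 2)) y := this
      _ = ∫ y in Metric.ball (0:E2) 1, 2 * (Q y * f y ^ 2) :=
          integral_indicator measurableSet_ball
      _ = 2 * ∫ y in Metric.ball (0:E2) 1, Q y * f y ^ 2 := integral_const_mul _ _
  -- conclude
  have h8 : ∫ y, φ y ≤ 2 * (∫ y, Q y * ‖fderiv ℝ f y‖ ^ 2)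
      + (1/2) * ∫ y, Q y * f y ^ 2 * ‖y‖ ^ 2 / (1 + ‖y‖ ^ 2) ^ 2 := by
    calc ∫ y, φ y ≤ ∫ y, (φ y + ψ y) := h5
      _ = ∫ y, A y * fderiv ℝ g y y := hEeq.symm
      _ ≤ _ := h6
  linarith [h7, h8]
end
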